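/- arXiv:2312.17675 — 4 statements merged into one kernel-verified Lean document; each statement's English description precedes it below -/
import Mathlib

section
/- Let f, g : [a, b] → ℝ be continuous with a < b, and suppose the equalizer E = {x ∈ [a, b] : f(x) = g(x)} is finite. Assume: (1) for any two consecutive points x < y of E, f(t) < g(t) for all t ∈ (x, y) (no 'f-top bigon'); and (2) at every point x ∈ E ∩ (a, b), the function f − g changes sign at x, i.e., there exists ε > 0 such that f − g is negative on one side of x and positive on the other side within (x − ε, x + ε) ∩ [a, b] (no 'touching'). Then E has at most 2 elements. -/
/-!
Among three or more intersection points, take one, `y`, that is neither the first nor the last,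
together with its neighbours `x < y < z` in `E`. Since there is no `f`-top bigon, `f < g` on both
`(x, y)` and `(y, z)`, so `f - g` is negative on both sides of the interior point `y` and cannot
change sign there.
-/

open Set

def ConsecutiveIn {α : Type*} [LinearOrder α] (s : Set α) (x y : α) : Prop :=
  x < y ∧ ∀ z ∈ s, ¬ (x < z ∧ z < y)

section ConsecutiveIn

variable {α : Type*} [LinearOrder α] {s : Set α}

theorem Set.Finite.exists_consecutiveIn_of_lt (hs : s.Finite) {x y : α} (hx : x ∈ s)
    (hxy : x < y) : ∃ w ∈ s, ConsecutiveIn s w y := by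
  obtain ⟨w, ⟨hw, hwy⟩, hmax⟩ := (s ∩ Iio y).exists_max_image id (hs.inter_of_left _) ⟨x, hx, hxy⟩
  exact ⟨w, hw, hwy, fun v hv ⟨hwv, hvy⟩ => (hmax v ⟨hv, hvy⟩).not_gt hwv⟩

theorem Set.Finite.exists_consecutiveIn_of_gt (hs : s.Finite) {y z : α} (hz : z ∈ s)
    (hyz : y < z) : ∃ w ∈ s, ConsecutiveIn s y w := by
  obtain ⟨w, ⟨hw, hyw⟩, hmin⟩ := (s ∩ Ioi y).exists_min_image id (hs.inter_of_left _) ⟨z, hz, hyz⟩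
  exact ⟨w, hw, hyw, fun v hv ⟨hyv, hvw⟩ => (hmin v ⟨hv, hyv⟩).not_gt hvw⟩

theorem exists_lt_lt_of_two_lt_ncard (h : 2 < s.ncard) :
    ∃ x ∈ s, ∃ y ∈ s, ∃ z ∈ s, x < y ∧ y < z := by
  have hs : s.Finite := finite_of_ncard_pos (by omega)
  have hne : s.Nonempty := nonempty_of_ncard_ne_zero (by omega)
  obtain ⟨m, hm, hmin⟩ := s.exists_min_image id hs hne
  obtain ⟨M, hM, hmax⟩ := s.exists_max_image id hs hne
  obtain ⟨y, ⟨hy, hym⟩, hyM⟩ := exists_ne_of_one_lt_ncard (s := s \ {m})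
    (by rw [ncard_sdiff_singleton_of_mem hm]; omega) M
  exact ⟨m, hm, y, hy, M, hM, (hmin y hy).lt_of_ne (Ne.symm hym), (hmax y hy).lt_of_ne hyM⟩

theorem exists_consecutiveIn_triple_of_two_lt_ncard (h : 2 < s.ncard) :
    ∃ x ∈ s, ∃ y ∈ s, ∃ z ∈ s, ConsecutiveIn s x y ∧ ConsecutiveIn s y z := by
  have hs : s.Finite := finite_of_ncard_pos (by omega)
  obtain ⟨x, hx, y, hy, z, hz, hxy, hyz⟩ := exists_lt_lt_of_two_lt_ncard h
  obtain ⟨x', hx', hx'y⟩ := hs.exists_consecutiveIn_of_lt hx hxy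
  obtain ⟨z', hz', hyz'⟩ := hs.exists_consecutiveIn_of_gt hz hyz
  exact ⟨x', hx', y, hy, z', hz', hx'y, hyz'⟩

end ConsecutiveIn

theorem not_forall_pos_left_of_neg {u : ℝ → ℝ} {a b x y ε : ℝ} (hax : a ≤ x) (hyb : y ≤ b)
    (hxy : x < y) (hε : 0 < ε) (hneg : ∀ t ∈ Ioo x y, u t < 0) :
    ¬ ∀ t ∈ Ioo (y - ε) y ∩ Icc a b, 0 < u t := by
  intro hpos
  obtain ⟨t, hxt, hty⟩ := exists_between (max_lt hxy (sub_lt_self y hε))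
  rw [max_lt_iff] at hxt
  exact (hpos t ⟨⟨hxt.2, hty⟩, by linarith, by linarith⟩).not_gt (hneg t ⟨hxt.1, hty⟩)

theorem not_forall_pos_right_of_neg {u : ℝ → ℝ} {a b y z ε : ℝ} (hay : a ≤ y) (hzb : z ≤ b)
    (hyz : y < z) (hε : 0 < ε) (hneg : ∀ t ∈ Ioo y z, u t < 0) :
    ¬ ∀ t ∈ Ioo y (y + ε) ∩ Icc a b, 0 < u t := by
  intro hpos
  obtain ⟨t, hyt, htz⟩ := exists_between (lt_min hyz (lt_add_of_pos_right y hε))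
  rw [lt_min_iff] at htz
  exact (hpos t ⟨⟨hyt, htz.2⟩, by linarith, by linarith⟩).not_gt (hneg t ⟨hyt, htz.1⟩)

theorem at_most_two_intersections_general (a b : ℝ) (f g : ℝ → ℝ)
    (E : Set ℝ) (hE : E = {x ∈ Set.Icc a b | f x = g x})
    -- (1) no f-top bigon: between consecutive intersection points, f < g
    (htop : ∀ x ∈ E, ∀ y ∈ E, x < y → (∀ z ∈ E, ¬ (x < z ∧ z < y)) →
      ∀ t ∈ Set.Ioo x y, f t < g t)
    -- (2) sign change (no touching) at interior intersection points
    (hsign : ∀ x ∈ E ∩ Set.Ioo a b, ∃ ε > 0,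
      ((∀ t ∈ Set.Ioo (x - ε) x ∩ Set.Icc a b, f t - g t < 0) ∧
        (∀ t ∈ Set.Ioo x (x + ε) ∩ Set.Icc a b, 0 < f t - g t)) ∨
      ((∀ t ∈ Set.Ioo (x - ε) x ∩ Set.Icc a b, 0 < f t - g t) ∧
        (∀ t ∈ Set.Ioo x (x + ε) ∩ Set.Icc a b, f t - g t < 0))) :
    E.ncard ≤ 2 := by
  by_contra! h
  obtain ⟨x, hx, y, hy, z, hz, ⟨hxy, hxy'⟩, ⟨hyz, hyz'⟩⟩ :=
    exists_consecutiveIn_triple_of_two_lt_ncard h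
  have hIcc : E ⊆ Icc a b := hE ▸ fun _ hw => hw.1
  have hneg_left : ∀ t ∈ Ioo x y, f t - g t < 0 :=
    fun t ht => sub_neg.2 (htop x hx y hy hxy hxy' t ht)
  have hneg_right : ∀ t ∈ Ioo y z, f t - g t < 0 :=
    fun t ht => sub_neg.2 (htop y hy z hz hyz hyz' t ht)
  obtain ⟨ε, hε, ⟨-, hpos⟩ | ⟨hpos, -⟩⟩ :=
    hsign y ⟨hy, (hIcc hx).1.trans_lt hxy, hyz.trans_le (hIcc hz).2⟩
  · exact not_forall_pos_right_of_neg (hIcc hy).1 (hIcc hz).2 hyz hε hneg_right hpos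
  · exact not_forall_pos_left_of_neg (hIcc hx).1 (hIcc hy).2 hxy hε hneg_left hpos

theorem at_most_two_intersections (a b : ℝ) (hab : a < b) (f g : ℝ → ℝ)
    (hf : ContinuousOn f (Set.Icc a b)) (hg : ContinuousOn g (Set.Icc a b))
    (E : Set ℝ) (hE : E = {x ∈ Set.Icc a b | f x = g x}) (hEfin : E.Finite)
    -- (1) no f-top bigon: between consecutive intersection points, f < g
    (htop : ∀ x ∈ E, ∀ y ∈ E, x < y → (∀ z ∈ E, ¬ (x < z ∧ z < y)) →
      ∀ t ∈ Set.Ioo x y, f t < g t)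
    -- (2) sign change (no touching) at interior intersection points
    (hsign : ∀ x ∈ E ∩ Set.Ioo a b, ∃ ε > 0,
      ((∀ t ∈ Set.Ioo (x - ε) x ∩ Set.Icc a b, f t - g t < 0) ∧
        (∀ t ∈ Set.Ioo x (x + ε) ∩ Set.Icc a b, 0 < f t - g t)) ∨
      ((∀ t ∈ Set.Ioo (x - ε) x ∩ Set.Icc a b, 0 < f t - g t) ∧
        (∀ t ∈ Set.Ioo x (x + ε) ∩ Set.Icc a b, f t - g t < 0))) :
    E.ncard ≤ 2 :=
  at_most_two_intersections_general a b f g E hE htop hsign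
end

section
/- Let m ≥ 1 and let M be a perfect matching on the cyclically ordered set ZMod (2m) (i.e., an involution without fixed points, viewed as m unordered pairs) such that every two distinct pairs of M interleave (cross) in the cyclic order. Then every pair of M has the form {i, i + m}. -/
/-! The crossing condition for the pairs `{i, σ i}` and `{j, σ j}` says that `j` lies on the open
arc from `i` to `σ i` exactly when `σ j` lies on the complementary open arc from `σ i` to `i`, so
the permutation `σ` maps the first arc onto the second. With `d = (σ i - i).val` the arcs have
`d - 1` and `2m - d - 1` points, which forces `d = m`. -/

/-- `x` lies strictly inside the cyclic arc from `a` to `b` traversed in the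
positive direction in `ZMod n`. -/
def CyclicBtw (n : ℕ) (a x b : ZMod n) : Prop :=
  0 < (x - a).val ∧ (x - a).val < (b - a).val

open Finset

instance (n : ℕ) (a x b : ZMod n) : Decidable (CyclicBtw n a x b) :=
  inferInstanceAs (Decidable (_ ∧ _))

namespace CyclicBtw

variable {n : ℕ} {a x b : ZMod n}

theorem ne_left (h : CyclicBtw n a x b) : x ≠ a := by
  rintro rfl
  simp [CyclicBtw] at h

theorem ne_right (h : CyclicBtw n a x b) : x ≠ b := by
  rintro rfl
  exact h.2.false

end CyclicBtw

section

variable {n : ℕ} [NeZero n]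

theorem val_sub_rev_of_ne {a b : ZMod n} (hab : a ≠ b) : (a - b).val = n - (b - a).val := by
  rw [← neg_sub, ZMod.neg_val, if_neg (sub_ne_zero.mpr hab.symm)]

theorem cyclicBtw_swap_iff_not {a x b : ZMod n} (hxa : x ≠ a) (hxb : x ≠ b) (hab : a ≠ b) :
    CyclicBtw n b x a ↔ ¬ CyclicBtw n a x b := by
  have hu : (x - a).val ≠ 0 := by simpa [sub_eq_zero] using hxa
  have hw : (x - b).val ≠ 0 := by simpa [sub_eq_zero] using hxb
  have hw' : (x - b).val < n := ZMod.val_lt _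
  have hv : (b - a).val < n := ZMod.val_lt _
  have hsum : x - a = (x - b) + (b - a) := by abel
  unfold CyclicBtw
  rw [val_sub_rev_of_ne hab]
  rcases lt_or_ge ((x - b).val + (b - a).val) n with hlt | hge
  · rw [hsum, ZMod.val_add_of_lt hlt]
    constructor <;> intro h <;> omega
  · rw [hsum, ZMod.val_add_of_le hge] at hu ⊢
    constructor <;> intro h <;> omega

theorem card_cyclicBtw (a b : ZMod n) :
    #{x | CyclicBtw n a x b} = (b - a).val - 1 := by
  refine (card_nbij' (t := Ioo 0 (b - a).val) (fun x ↦ (x - a).val) (fun k ↦ a + k)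
    ?_ ?_ ?_ ?_).trans (Nat.card_Ioo 0 _)
  · intro x hx
    simpa [CyclicBtw] using hx
  · intro k hk
    have hkn : k < n := (mem_Ioo.mp hk).2.trans (ZMod.val_lt _)
    rw [mem_coe, mem_filter, CyclicBtw, add_sub_cancel_left, ZMod.val_cast_of_lt hkn]
    exact ⟨mem_univ _, mem_Ioo.mp hk⟩
  · intro x _
    simp
  · intro k hk
    have hkn : k < n := (mem_Ioo.mp hk).2.trans (ZMod.val_lt _)
    simp [ZMod.val_cast_of_lt hkn]

end

theorem crossing_matching_is_antipodal (m : ℕ) (hm : 1 ≤ m)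
    (σ : Equiv.Perm (ZMod (2 * m)))
    (hinv : ∀ x, σ (σ x) = x) (hfix : ∀ x, σ x ≠ x)
    (hcross : ∀ i j : ZMod (2 * m), j ≠ i → j ≠ σ i → i ≠ σ j →
      Xor' (CyclicBtw (2 * m) i j (σ i)) (CyclicBtw (2 * m) i (σ j) (σ i))) :
    ∀ i : ZMod (2 * m), σ i = i + (m : ZMod (2 * m)) := by
  have : NeZero (2 * m) := ⟨by omega⟩
  intro i
  have hi : i ≠ σ i := (hfix i).symm
  have harc (j : ZMod (2 * m)) :
      CyclicBtw (2 * m) i j (σ i) ↔ CyclicBtw (2 * m) (σ i) (σ j) i := by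
    by_cases hji : j = i
    · subst hji
      exact iff_of_false (fun h ↦ h.ne_left rfl) (fun h ↦ h.ne_left rfl)
    by_cases hjσ : j = σ i
    · subst hjσ
      exact iff_of_false (fun h ↦ h.ne_right rfl) (fun h ↦ h.ne_right (hinv i))
    have hσji : σ j ≠ i := fun h ↦ hjσ (by rw [← h, hinv])
    rw [cyclicBtw_swap_iff_not hσji (σ.injective.ne hji) hi, ← xor_iff_iff_not]
    exact hcross i j hji hjσ (Ne.symm hσji)
  have hcard := card_equiv σ (s := {x | CyclicBtw (2 * m) i x (σ i)})
    (t := {x | CyclicBtw (2 * m) (σ i) x i}) (by simpa using harc)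
  rw [card_cyclicBtw, card_cyclicBtw, val_sub_rev_of_ne hi] at hcard
  have hpos : (σ i - i).val ≠ 0 := by simpa [sub_eq_zero] using hfix i
  have hlt : (σ i - i).val < 2 * m := ZMod.val_lt _
  have hval : (σ i - i).val = m := by omega
  rw [← sub_eq_iff_eq_add', ← ZMod.natCast_zmod_val (σ i - i), hval]
end

section
/- Let C_1, …, C_n be closed arcs of the circle S¹ = ℝ/2πℤ such that for all i, j (possibly equal) C_i ∪ C_j ≠ S¹. Then there exists an orientation-preserving homeomorphism f : S¹ → S¹ such that for every i, the image f(C_i) is an arc of length strictly less than π. -/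
open Real Set intervalIntegral MeasureTheory
open scoped Classical

noncomputable section
local notation "pp" => (2 * Real.pi)
local notation "pr" => (fun t : ℝ => (t : AddCircle (2 * Real.pi)))

namespace NormalArcs

lemma pp_pos : (0:ℝ) < pp := by positivity


lemma coe_eq_coe {x y : ℝ} : (x : AddCircle pp) = (y : AddCircle pp) ↔ ∃ k : ℤ, y = x + k * pp := by
  rw [QuotientAddGroup.eq_iff_sub_mem, AddSubgroup.mem_zmultiples_iff]
  constructor
  · rintro ⟨k, hk⟩
    exact ⟨-k, by push_cast [zsmul_eq_mul] at hk ⊢; linarith⟩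
  · rintro ⟨k, hk⟩
    exact ⟨-k, by push_cast [zsmul_eq_mul]; linarith⟩

lemma mem_arc_iff {a b x : ℝ} :
    (x : AddCircle pp) ∈ (fun t : ℝ => (t : AddCircle pp)) '' Set.Icc a b ↔
      ∃ k : ℤ, a ≤ x + k * pp ∧ x + k * pp ≤ b := by
  constructor
  · rintro ⟨y, hy, hxy⟩
    obtain ⟨k, hk⟩ := coe_eq_coe.mp hxy.symm
    exact ⟨k, by rw [← hk]; exact hy.1, by rw [← hk]; exact hy.2⟩
  · rintro ⟨k, h1, h2⟩
    exact ⟨x + k * pp, ⟨h1, h2⟩, (coe_eq_coe.mpr ⟨k, rfl⟩).symm⟩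

lemma arc_eq_univ {a b : ℝ} (h : a + pp ≤ b) :
    (fun t : ℝ => (t : AddCircle pp)) '' Set.Icc a b = Set.univ := by
  ext z
  simp only [Set.mem_univ, iff_true]
  obtain ⟨x, rfl⟩ := QuotientAddGroup.mk_surjective z
  refine mem_arc_iff.mpr ?_
  refine ⟨-toIcoDiv pp_pos a x, ?_, ?_⟩
  · have := (toIcoMod_mem_Ico pp_pos a x).1
    rw [toIcoMod] at this; push_cast [zsmul_eq_mul] at this ⊢; linarith
  · have := (toIcoMod_mem_Ico pp_pos a x).2
    rw [toIcoMod] at this; push_cast [zsmul_eq_mul] at this ⊢; linarith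


lemma coe_toIcoMod (a x : ℝ) : ((toIcoMod pp_pos a x : ℝ) : AddCircle pp) = (x : AddCircle pp) :=
  coe_eq_coe.mpr ⟨toIcoDiv pp_pos a x, by rw [toIcoMod]; push_cast [zsmul_eq_mul]; ring⟩

lemma rep_of_not_mem_arc {u w : ℝ} (z : AddCircle pp)
    (hz : z ∉ pr '' Set.Icc u w) :
    ∃ r : ℝ, (r : AddCircle pp) = z ∧ w < r ∧ r < u + pp := by
  obtain ⟨x, rfl⟩ := QuotientAddGroup.mk_surjective z
  set r := toIcoMod pp_pos w x with hr
  have hmem := toIcoMod_mem_Ico pp_pos w x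
  by_cases hru : w < r
  · refine ⟨r, coe_toIcoMod w x, hru, ?_⟩
    by_contra hc
    push_neg at hc
    apply hz
    refine ⟨r - pp, ⟨by linarith [hmem.2], by linarith [hmem.2]⟩, ?_⟩
    rw [← coe_toIcoMod w x]
    exact coe_eq_coe.mpr ⟨1, by push_cast; ring⟩
  · have hrw : r = w := le_antisymm (not_lt.mp hru) hmem.1
    have huw : w < u := by
      by_contra hc
      push_neg at hc
      exact hz ⟨w, ⟨hc, le_refl w⟩, by rw [← hrw]; exact coe_toIcoMod w x⟩
    refine ⟨r + pp, ?_, by linarith [pp_pos], by linarith⟩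
    rw [← coe_toIcoMod w x]
    exact coe_eq_coe.mpr ⟨-1, by rw [hr]; push_cast; ring⟩



lemma continuous_pr : Continuous pr := continuous_quotient_mk'

lemma isClosed_arc (a b : ℝ) : IsClosed (pr '' Set.Icc a b) := by
  haveI : Fact ((0:ℝ) < pp) := ⟨pp_pos⟩
  exact (isCompact_Icc.image continuous_pr).isClosed

lemma isPreconnected_arc (a b : ℝ) : IsPreconnected (pr '' Set.Icc a b) :=
  (isPreconnected_Icc).image _ continuous_pr.continuousOn

lemma frontier_arc_subset {a b : ℝ} (hab : a ≤ b) :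
    frontier (pr '' Set.Icc a b) ⊆ {pr a, pr b} := by
  intro z hz
  have h1 : z ∈ pr '' Set.Icc a b := by
    have := hz.1
    rwa [(isClosed_arc a b).closure_eq] at this
  have h2 : z ∉ pr '' Set.Ioo a b := by
    intro hmem
    exact hz.2 (interior_maximal (Set.image_mono Set.Ioo_subset_Icc_self)
      (QuotientAddGroup.isOpenMap_coe _ isOpen_Ioo) hmem)
  obtain ⟨y, hy, rfl⟩ := h1
  rcases eq_or_lt_of_le hy.1 with h | h
  · exact Or.inl (by rw [h])
  rcases eq_or_lt_of_le hy.2 with h' | h'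
  · exact Or.inr (by rw [h']; exact Set.mem_singleton _)
  exact absurd ⟨y, ⟨h, h'⟩, rfl⟩ h2

lemma preconnected_inter_frontier {α : Type*} [TopologicalSpace α] {t s : Set α}
    (ht : IsPreconnected t) (h1 : (t ∩ s).Nonempty) (h2 : (t \ s).Nonempty) :
    (t ∩ frontier s).Nonempty := by
  by_contra hc
  push_neg at hc
  have hdisj : ∀ x ∈ t, x ∉ frontier s := fun x hx hxf =>
    (Set.eq_empty_iff_forall_notMem.mp hc x) ⟨hx, hxf⟩
  have hin : ∀ x ∈ t, x ∈ s → x ∈ interior s := by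
    intro x hx hxs
    by_contra hxi
    exact hdisj x hx ⟨subset_closure hxs, hxi⟩
  have hout : ∀ x ∈ t, x ∉ s → x ∈ interior sᶜ := by
    intro x hx hxs
    by_contra hxi
    refine hdisj x hx ?_
    rw [← frontier_compl]
    exact ⟨subset_closure hxs, hxi⟩
  have key := ht (interior s) (interior sᶜ) isOpen_interior isOpen_interior
    (fun x hx => by
      rcases Classical.em (x ∈ s) with h | h
      · exact Or.inl (hin x hx h)
      · exact Or.inr (hout x hx h))
    ⟨h1.choose, h1.choose_spec.1, hin _ h1.choose_spec.1 h1.choose_spec.2⟩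
    ⟨h2.choose, h2.choose_spec.1, hout _ h2.choose_spec.1 h2.choose_spec.2⟩
  obtain ⟨x, _, hx1, hx2⟩ := key
  exact absurd (interior_subset hx1) (interior_subset hx2)


lemma per_int (F : ℝ → ℝ) (hper : ∀ x, F (x + pp) = F x + pp) (x : ℝ) (k : ℤ) :
    F (x + k * pp) = F x + k * pp := by
  induction k using Int.induction_on with
  | zero => simp
  | succ n ih =>
      have h := hper (x + (n:ℝ) * pp)
      push_cast at ih ⊢
      ring_nf at h ih ⊢
      linarith
  | pred n ih =>
      have h := hper (x + (-(n:ℝ)-1) * pp)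
      rw [show x + (-(n:ℝ)-1) * pp + pp = x + (-(n:ℝ)) * pp by ring] at h
      push_cast at ih ⊢
      ring_nf at h ih ⊢
      linarith

def circMap (F : ℝ → ℝ) (hper : ∀ x, F (x + pp) = F x + pp) : AddCircle pp → AddCircle pp :=
  Quotient.map' F (by
    intro x y hxy
    rw [QuotientAddGroup.leftRel_apply, AddSubgroup.mem_zmultiples_iff] at hxy ⊢
    obtain ⟨k, hk⟩ := hxy
    refine ⟨k, ?_⟩
    have hy : y = x + k * pp := by push_cast [zsmul_eq_mul] at hk ⊢; linarith
    rw [hy, per_int F hper x k]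
    push_cast [zsmul_eq_mul]; ring)

lemma circMap_coe (F : ℝ → ℝ) (hper : ∀ x, F (x + pp) = F x + pp) (x : ℝ) :
    circMap F hper (x : AddCircle pp) = ((F x : ℝ) : AddCircle pp) := rfl

lemma circMap_continuous (F : ℝ → ℝ) (hper : ∀ x, F (x + pp) = F x + pp) (hF : Continuous F) :
    Continuous (circMap F hper) := by
  rw [(isQuotientMap_quotient_mk').continuous_iff]
  exact (continuous_quotient_mk').comp hF



lemma symm_per (e : ℝ ≃o ℝ) (hper : ∀ x, e (x + pp) = e x + pp) : ∀ y, e.symm (y + pp) = e.symm y + pp := by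
  intro y
  apply e.injective
  rw [hper, e.apply_symm_apply, e.apply_symm_apply]

def circHomeo (e : ℝ ≃o ℝ) (hper : ∀ x, e (x + pp) = e x + pp) : AddCircle pp ≃ₜ AddCircle pp where
  toFun := circMap e hper
  invFun := circMap e.symm (symm_per e hper)
  left_inv := by
    intro z
    obtain ⟨x, rfl⟩ := QuotientAddGroup.mk_surjective z
    rw [circMap_coe, circMap_coe, e.symm_apply_apply]
  right_inv := by
    intro z
    obtain ⟨x, rfl⟩ := QuotientAddGroup.mk_surjective z
    rw [circMap_coe, circMap_coe, e.apply_symm_apply]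
  continuous_toFun := circMap_continuous _ hper (e.toHomeomorph.continuous)
  continuous_invFun := circMap_continuous _ (symm_per e hper) (e.symm.toHomeomorph.continuous)

lemma circHomeo_coe (e : ℝ ≃o ℝ) (hper : ∀ x, e (x + pp) = e x + pp) (x : ℝ) : circHomeo e hper (x : AddCircle pp) = ((e x : ℝ) : AddCircle pp) := circMap_coe (⇑e) hper x

lemma circHomeo_image_arc (e : ℝ ≃o ℝ) (hper : ∀ x, e (x + pp) = e x + pp) (u w : ℝ) :
    (circHomeo e hper) '' (pr '' Set.Icc u w) = pr '' Set.Icc (e u) (e w) := by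
  rw [← Set.image_comp]
  have : (circHomeo e hper) ∘ pr = pr ∘ e := by
    funext x; exact circHomeo_coe e hper x
  rw [this, Set.image_comp, e.image_Icc]



variable {δ : ℝ}

def B (δ t : ℝ) : ℝ := max (Real.cos t - Real.cos δ) 0

lemma B_cont : Continuous (B δ) := (Real.continuous_cos.sub continuous_const).max continuous_const

lemma B_nonneg (t : ℝ) : 0 ≤ B δ t := le_max_right _ _

lemma B_per : Function.Periodic (B δ) pp := fun t => by
  unfold B; rw [Real.cos_periodic t]

lemma B_intble (a b : ℝ) : IntervalIntegrable (B δ) volume a b :=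
  (B_cont).intervalIntegrable a b

lemma B_intble' (q a b : ℝ) : IntervalIntegrable (fun t => B δ (t - q)) volume a b :=
  (B_cont.comp (continuous_id.sub continuous_const)).intervalIntegrable a b

def Bint (δ : ℝ) : ℝ := ∫ t in (0:ℝ)..pp, B δ t

lemma Bint_pos (hδ0 : 0 < δ) (hδ : δ ≤ π/2) : 0 < Bint δ := by
  have h1 : 0 < ∫ t in (0:ℝ)..(δ/2), B δ t := by
    apply intervalIntegral_pos_of_pos_on (B_intble 0 (δ/2)) ?_ (by linarith)
    intro t ht
    obtain ⟨ht1, ht2⟩ := ht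
    have hc : Real.cos δ < Real.cos t := by
      apply Real.strictAntiOn_cos ⟨le_of_lt ht1, by linarith [Real.pi_pos]⟩
        ⟨by linarith, by linarith [Real.pi_pos]⟩ (by linarith)
    simp only [B, lt_max_iff]; left; linarith
  have h2 : (0:ℝ) ≤ ∫ t in (δ/2)..pp, B δ t := by
    apply intervalIntegral.integral_nonneg (by linarith [Real.pi_gt_three]) (fun t _ => B_nonneg t)
  have h3 := integral_add_adjacent_intervals (B_intble (δ:=δ) 0 (δ/2)) (B_intble (δ:=δ) (δ/2) pp)
  have h4 : Bint δ = ∫ t in (0:ℝ)..pp, B δ t := rfl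
  rw [h4, ← h3]; linarith

lemma B_eq_zero (hδ0 : 0 < δ) (hδ : δ ≤ π/2) {s : ℝ} (h1 : δ - pp ≤ s) (h2 : s ≤ -δ) :
    B δ s = 0 := by
  have key : Real.cos s ≤ Real.cos δ := by
    have hs : Real.cos s = Real.cos (-s) := (Real.cos_neg s).symm
    rcases le_or_gt (-s) π with h | h
    · rw [hs]
      exact Real.cos_le_cos_of_nonneg_of_le_pi (le_of_lt hδ0) h (by linarith)
    · have hv : Real.cos (-s) = Real.cos (pp - -s) := by
        rw [Real.cos_sub]; simp
      rw [hs, hv]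
      exact Real.cos_le_cos_of_nonneg_of_le_pi (le_of_lt hδ0) (by linarith) (by linarith)
  simp only [B, max_eq_right_iff]; linarith

-- primitive of shifted bump
def GP (δ q x : ℝ) : ℝ := ∫ t in (0:ℝ)..x, B δ (t - q)

lemma GP_cont (q : ℝ) : Continuous (GP δ q) := by
  apply intervalIntegral.continuous_primitive
  intro a b
  exact B_intble' q a b

lemma GP_sub {q x y : ℝ} : GP δ q y - GP δ q x = ∫ t in x..y, B δ (t - q) := by
  have := integral_add_adjacent_intervals (B_intble' (δ:=δ) q 0 x) (B_intble' (δ:=δ) q x y)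
  unfold GP
  linarith

lemma GP_mono (q : ℝ) : Monotone (GP δ q) := by
  intro x y hxy
  have h : 0 ≤ GP δ q y - GP δ q x := by
    rw [GP_sub]
    exact intervalIntegral.integral_nonneg hxy (fun t _ => B_nonneg _)
  linarith

lemma GP_per (q x : ℝ) : GP δ q (x + pp) = GP δ q x + Bint δ := by
  have h : GP δ q (x + pp) - GP δ q x = ∫ t in x..(x+pp), B δ (t - q) := GP_sub
  have h2 : (∫ t in x..(x+pp), B δ (t - q)) = ∫ t in (x-q)..(x+pp-q), B δ t :=
    intervalIntegral.integral_comp_sub_right _ q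
  have h3 : (∫ t in (x-q)..((x-q)+pp), B δ t) = ∫ t in (0:ℝ)..(0+pp), B δ t :=
    (B_per).intervalIntegral_add_eq (x-q) 0
  have h4 : x + pp - q = (x - q) + pp := by ring
  have h5 : Bint δ = ∫ t in (0:ℝ)..pp, B δ t := rfl
  rw [h2, h4, h3] at h
  rw [h5]
  rw [zero_add] at h
  linarith

-- integral vanishes over [u,w] if q is (mod pp) in [w+δ, u+pp-δ]
lemma GP_arc_zero (hδ0 : 0 < δ) (hδ : δ ≤ π/2) {q u w : ℝ} (huw : u ≤ w)
    (h : ∃ m : ℤ, w + δ ≤ q + m * pp ∧ q + m * pp ≤ u + pp - δ) :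
    GP δ q w - GP δ q u = 0 := by
  rw [GP_sub]
  have hz : ∀ t ∈ Set.uIcc u w, B δ (t - q) = (0:ℝ) := by
    intro t ht
    rw [Set.uIcc_of_le huw] at ht
    obtain ⟨m, hm1, hm2⟩ := h
    have hcos : B δ (t - q) = B δ (t - (q + m * pp)) := by
      have : t - q = (t - (q + m*pp)) + m * pp := by ring
      rw [this]
      exact (B_per.int_mul m _).symm ▸ rfl
    rw [hcos]
    exact B_eq_zero hδ0 hδ (by linarith [ht.1, ht.2]) (by linarith [ht.1, ht.2])
  calc (∫ t in u..w, B δ (t - q)) = ∫ t in u..w, (0:ℝ) :=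
        intervalIntegral.integral_congr hz
    _ = 0 := intervalIntegral.integral_zero

-- integral over arc is at most Bint
lemma GP_arc_le (hδ0 : 0 < δ) {q u w : ℝ} (huw : u ≤ w) (hlen : w ≤ u + pp) :
    GP δ q w - GP δ q u ≤ Bint δ := by
  have h1 : GP δ q (u + pp) - GP δ q u = Bint δ := by rw [GP_per]; ring
  have h2 := GP_mono (δ:=δ) q hlen
  linarith


theorem gordan {n : ℕ} {P : Type} [Fintype P] [Nonempty P] (A : Fin n → P → ℝ)
    (hdual : ∀ lam : Fin n → ℝ, (∀ i, 0 ≤ lam i) → (∑ i, lam i) = 1 →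
      ∃ p, 0 < ∑ i, lam i * A i p) :
    ∃ x : P → ℝ, (∀ p, 0 ≤ x p) ∧ (∑ p, x p) = 1 ∧ ∀ i, 0 < ∑ p, x p * A i p := by
  classical
  by_contra hcon
  push_neg at hcon
  -- the linear map
  set L : (P → ℝ) →ₗ[ℝ] (Fin n → ℝ) :=
    { toFun := fun x i => ∑ p, x p * A i p
      map_add' := by
        intro x y; funext i; simp [add_mul, Finset.sum_add_distrib]
      map_smul' := by
        intro c x; funext i; simp [Finset.mul_sum, mul_assoc] } with hL
  set S : Set (Fin n → ℝ) := Set.univ.pi (fun _ => Set.Ioi (0:ℝ)) with hS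
  set T : Set (Fin n → ℝ) := L '' (stdSimplex ℝ P) with hT
  have hSopen : IsOpen S := isOpen_set_pi Set.finite_univ (fun _ _ => isOpen_Ioi)
  have hSconv : Convex ℝ S := convex_pi (fun _ _ => convex_Ioi 0)
  have hTconv : Convex ℝ T := (convex_stdSimplex ℝ P).linear_image L
  have hdisj : Disjoint S T := by
    rw [Set.disjoint_left]
    rintro y hyS ⟨x, hx, rfl⟩
    obtain ⟨i, hi⟩ := hcon x (fun p => hx.1 p) hx.2
    exact absurd (hyS i (Set.mem_univ i)) (by simpa [hL] using hi)
  obtain ⟨f, u, hfS, hfT⟩ := geometric_hahn_banach_open hSconv hSopen hTconv hdisj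
  -- basis vectors
  set e : Fin n → (Fin n → ℝ) := fun i => fun j => if i = j then 1 else 0 with he
  have hone : ∀ c : ℝ, 0 < c → f (fun _ => c) < u := by
    intro c hc
    exact hfS _ (fun i _ => by simpa using hc)
  have hu0 : 0 ≤ u := by
    by_contra hu
    push_neg at hu
    obtain ⟨c, hc0, hc⟩ : ∃ c : ℝ, 0 < c ∧ c * |f (fun _ => (1:ℝ))| < -u := by
      refine ⟨(-u) / (2 * (|f (fun _ => (1:ℝ))| + 1)), div_pos (by linarith) (by positivity), ?_⟩
      rw [div_mul_eq_mul_div, mul_comm]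
      rw [div_lt_iff₀ (by positivity)]
      nlinarith [abs_nonneg (f (fun _ => (1:ℝ)))]
    have h1 : f (fun _ => c) = c * f (fun _ => (1:ℝ)) := by
      have : (fun (_ : Fin n) => c) = c • (fun _ => (1:ℝ)) := by funext; simp
      rw [this, _root_.map_smul]; rfl
    have := hone c hc0
    rw [h1] at this
    nlinarith [le_abs_self (f (fun _ => (1:ℝ))), neg_abs_le (f (fun _ => (1:ℝ)))]
  set lam : Fin n → ℝ := fun i => -(f (e i)) with hlam
  have hlamnn : ∀ i, 0 ≤ lam i := by
    intro i
    by_contra hneg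
    push_neg at hneg
    have hfe : 0 < f (e i) := by simpa [hlam] using hneg
    set t : ℝ := (|u| + 1 + |f (fun _ => (1:ℝ))|) / f (e i) with ht
    have htpos : 0 < t := by positivity
    have hmem : ((fun _ => (1:ℝ)) + t • e i) ∈ S := by
      intro j _
      simp only [Pi.add_apply, Pi.smul_apply, he, smul_eq_mul]
      rcases eq_or_ne i j with h | h <;> simp [h] <;> positivity
    have := hfS _ hmem
    rw [map_add, _root_.map_smul] at this
    have hts : t * f (e i) = |u| + 1 + |f (fun _ => (1:ℝ))| := by
      rw [ht, div_mul_cancel₀]; exact ne_of_gt hfe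
    have : f (fun _ => (1:ℝ)) + t * f (e i) < u := this
    nlinarith [le_abs_self u, neg_abs_le (f (fun _ => (1:ℝ)))]
  have hfy : ∀ y : Fin n → ℝ, f y = ∑ i, y i * f (e i) := by
    intro y
    have hy := pi_eq_sum_univ y
    calc f y = f (∑ i, y i • e i) := by rw [← hy]
    _ = ∑ i, y i * f (e i) := by rw [map_sum]; simp [_root_.map_smul]
  have hcardne : (Fintype.card P : ℝ) ≠ 0 := by
    exact_mod_cast Fintype.card_ne_zero
  have hTne : L (fun _ => (Fintype.card P : ℝ)⁻¹) ∈ T := by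
    refine ⟨_, ⟨fun p => by positivity, ?_⟩, rfl⟩
    rw [Finset.sum_const, Finset.card_univ, nsmul_eq_mul, mul_inv_cancel₀ hcardne]
  have hnz : ∃ i, lam i ≠ 0 := by
    by_contra hall
    push_neg at hall
    have hf0 : ∀ y, f y = 0 := by
      intro y
      rw [hfy]
      apply Finset.sum_eq_zero
      intro i _
      have : f (e i) = 0 := by have := hall i; simp [hlam] at this; linarith
      rw [this, mul_zero]
    have h1 : (0:ℝ) < u := by have := hone 1 one_pos; rwa [hf0] at this
    have h2 : u ≤ 0 := by have := hfT _ hTne; rwa [hf0] at this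
    linarith
  have husum : 0 < ∑ i, lam i := by
    obtain ⟨i, hi⟩ := hnz
    apply Finset.sum_pos' (fun j _ => hlamnn j)
    exact ⟨i, Finset.mem_univ i, lt_of_le_of_ne (hlamnn i) (Ne.symm hi)⟩
  obtain ⟨p, hp⟩ := hdual (fun i => lam i / (∑ j, lam j))
    (fun i => div_nonneg (hlamnn i) (le_of_lt husum))
    (by rw [← Finset.sum_div, div_self (ne_of_gt husum)])
  have hkey : 0 < ∑ i, lam i * A i p := by
    have heq : (∑ i, lam i / (∑ j, lam j) * A i p) = (∑ i, lam i * A i p) / (∑ j, lam j) := by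
      rw [Finset.sum_div]
      exact Finset.sum_congr rfl (fun i _ => by ring)
    rw [heq] at hp
    have := mul_pos hp husum
    rwa [div_mul_cancel₀ _ (ne_of_gt husum)] at this
  have hbT : (fun i => A i p) ∈ T := by
    refine ⟨(fun p' => if p' = p then 1 else 0), ⟨fun p' => by dsimp only; split <;> norm_num, by simp⟩, ?_⟩
    funext i
    simp only [hL, LinearMap.coe_mk, AddHom.coe_mk]
    rw [Finset.sum_congr rfl (fun p' _ => by rw [ite_mul, one_mul, zero_mul])]
    simp
  have hub := hfT _ hbT
  rw [hfy] at hub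
  have hfin : (∑ i, A i p * f (e i)) = -∑ i, lam i * A i p := by
    rw [← Finset.sum_neg_distrib]
    exact Finset.sum_congr rfl (fun i _ => by simp [hlam]; ring)
  rw [hfin] at hub
  linarith



-- endpoints belong to arcs
lemma endpoint_mem_left {a b : ℝ} (hab : a ≤ b) : pr a ∈ pr '' Set.Icc a b :=
  ⟨a, ⟨le_refl a, hab⟩, rfl⟩

lemma endpoint_mem_right {a b : ℝ} (hab : a ≤ b) : pr b ∈ pr '' Set.Icc a b :=
  ⟨b, ⟨hab, le_refl b⟩, rfl⟩

/-- The combinatorial dual lemma: for pairwise intersecting closed arcs and any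
probability vector, some endpoint has weight more than 1/2. -/
lemma dual_lemma {n : ℕ} (a b : Fin n → ℝ) (hab : ∀ i, a i ≤ b i)
    (hmeet : ∀ i j, ((pr '' Set.Icc (a i) (b i)) ∩ (pr '' Set.Icc (a j) (b j))).Nonempty)
    (lam : Fin n → ℝ) (hlam : ∀ i, 0 ≤ lam i) (hsum : ∑ i, lam i = 1) :
    ∃ p : Fin n × Bool,
      (1:ℝ)/2 < ∑ i, (if (if p.2 then pr (b p.1) else pr (a p.1)) ∈ pr '' Set.Icc (a i) (b i)
          then lam i else 0) := by
  classical
  set E : Fin n → Set (AddCircle pp) := fun i => pr '' Set.Icc (a i) (b i) with hE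
  -- support
  set supp : Set (Fin n) := {i | 0 < lam i} with hsupp
  have hsuppne : supp.Nonempty := by
    by_contra hc
    rw [Set.not_nonempty_iff_eq_empty] at hc
    have hz : ∀ i ∈ Finset.univ, lam i = 0 := by
      intro i _
      by_contra hne
      have hmem : i ∈ supp := by
        rw [hsupp]
        exact Set.mem_setOf.mpr (lt_of_le_of_ne (hlam i) (Ne.symm hne))
      rw [hc] at hmem
      exact absurd hmem (Set.notMem_empty i)
    rw [Finset.sum_eq_zero hz] at hsum
    norm_num at hsum
  obtain ⟨istar, histar, hmin'⟩ := Set.Finite.exists_minimalFor E supp (Set.toFinite supp) hsuppne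
  have hmin : ∀ j ∈ supp, E j ⊆ E istar → E istar = E j := fun j hj h => le_antisymm (hmin' hj h) h
  -- every supported arc contains an endpoint of E istar
  have hclaim : ∀ j, j ∈ supp → pr (a istar) ∈ E j ∨ pr (b istar) ∈ E j := by
    intro j hj
    by_cases hsub : E j ⊆ E istar
    · have heq : E j = E istar := (hmin j hj hsub).symm
      rw [heq]
      exact Or.inl (endpoint_mem_left (hab istar))
    · rw [Set.not_subset] at hsub
      obtain ⟨y, hy1, hy2⟩ := hsub
      obtain ⟨x, hx⟩ := hmeet j istar
      have hz := preconnected_inter_frontier (isPreconnected_arc (a j) (b j))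
        ⟨x, hx.1, hx.2⟩ ⟨y, hy1, hy2⟩
      obtain ⟨z, hz1, hz2⟩ := hz
      rcases frontier_arc_subset (hab istar) hz2 with h | h
      · exact Or.inl (h ▸ hz1)
      · exact Or.inr (h ▸ hz1)
  -- weights at the two endpoints
  set wa : ℝ := ∑ i, (if pr (a istar) ∈ E i then lam i else 0) with hwa
  set wb : ℝ := ∑ i, (if pr (b istar) ∈ E i then lam i else 0) with hwb
  have hkey : 1 + lam istar ≤ wa + wb := by
    have hpt : ∀ i, (if i = istar then 2 * lam i else lam i) ≤
        (if pr (a istar) ∈ E i then lam i else 0) + (if pr (b istar) ∈ E i then lam i else 0) := by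
      intro i
      rcases eq_or_ne i istar with rfl | hne
      · have h1 : pr (a i) ∈ E i := endpoint_mem_left (hab i)
        have h2 : pr (b i) ∈ E i := endpoint_mem_right (hab i)
        rw [if_pos rfl, if_pos h1, if_pos h2]
        linarith [hlam i]
      · rw [if_neg hne]
        rcases le_or_gt (lam i) 0 with h0 | h0
        · have : lam i = 0 := le_antisymm h0 (hlam i)
          rw [this]
          positivity
        · rcases hclaim i (Set.mem_setOf.mpr h0) with h | h
          · rw [if_pos h]
            have : (0:ℝ) ≤ (if pr (b istar) ∈ E i then lam i else 0) := by positivity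
            linarith
          · rw [if_pos h]
            have : (0:ℝ) ≤ (if pr (a istar) ∈ E i then lam i else 0) := by positivity
            linarith
    have hsum2 : (∑ i, (if i = istar then 2 * lam i else lam i)) = 1 + lam istar := by
      have : (∑ i, (if i = istar then 2 * lam i else lam i)) =
          (∑ i, lam i) + ∑ i, (if i = istar then lam i else 0) := by
        rw [← Finset.sum_add_distrib]
        exact Finset.sum_congr rfl (fun i _ => by split <;> ring)
      rw [this, hsum, Finset.sum_ite_eq' Finset.univ istar lam, if_pos (Finset.mem_univ istar)]
    calc 1 + lam istar = ∑ i, (if i = istar then 2 * lam i else lam i) := hsum2.symm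
      _ ≤ ∑ i, ((if pr (a istar) ∈ E i then lam i else 0) + (if pr (b istar) ∈ E i then lam i else 0)) :=
          Finset.sum_le_sum (fun i _ => hpt i)
      _ = wa + wb := by rw [Finset.sum_add_distrib]
  have histar' : 0 < lam istar := histar
  rcases le_or_gt wa (1/2) with h | h
  · refine ⟨(istar, true), ?_⟩
    have hwb2 : (1:ℝ)/2 < wb := by linarith
    rw [hwb, hE] at hwb2
    simpa using hwb2
  · refine ⟨(istar, false), ?_⟩
    rw [hwa, hE] at h
    simpa using h

lemma sum_ind {γ : Type*} [Fintype γ] (lam : γ → ℝ) (c : γ → Prop) :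
    (∑ g, lam g * ((if c g then (1:ℝ) else 0) - 1/2)) =
      (∑ g, if c g then lam g else 0) - (∑ g, lam g)/2 := by
  rw [Finset.sum_div, ← Finset.sum_sub_distrib]
  refine Finset.sum_congr rfl (fun g _ => ?_)
  split <;> ring

end NormalArcs

set_option maxHeartbeats 1600000 in
open Real NormalArcs in
theorem normal_arcs_shortened_aux
    {n : ℕ} (C : Fin n → Set (AddCircle (2 * π)))
    (harc : ∀ i, ∃ u w : ℝ, u ≤ w ∧
      C i = (fun x : ℝ => (x : AddCircle (2 * π))) '' Set.Icc u w)
    (hnormal : ∀ i j, C i ∪ C j ≠ Set.univ) :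
    ∃ f : AddCircle (2 * π) ≃ₜ AddCircle (2 * π), ∃ F : ℝ → ℝ, StrictMono F ∧
      (∀ x : ℝ, f (x : AddCircle (2 * π)) = (F x : AddCircle (2 * π))) ∧
      ∀ i, ∃ c d : ℝ, c ≤ d ∧ d - c < π ∧
        f '' C i = (fun x : ℝ => (x : AddCircle (2 * π))) '' Set.Icc c d := by
  classical
  rcases Nat.eq_zero_or_pos n with hn | hn
  · subst hn
    exact ⟨Homeomorph.refl _, id, strictMono_id, fun x => rfl, fun i => i.elim0⟩
  haveI : NeZero n := ⟨Nat.pos_iff_ne_zero.mp hn⟩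
  choose u w huw hCeq using harc
  -- arcs are proper
  have hlen : ∀ i, w i < u i + pp := by
    intro i
    by_contra hc
    push_neg at hc
    apply hnormal i i
    rw [Set.union_self, hCeq i]
    exact arc_eq_univ (by linarith)
  -- witnesses outside each pair
  have hz : ∀ i j : Fin n, ∃ r1 r2 : ℝ, (r1 : AddCircle pp) = (r2 : AddCircle pp) ∧
      w i < r1 ∧ r1 < u i + pp ∧ w j < r2 ∧ r2 < u j + pp := by
    intro i j
    have hne := hnormal i j
    rw [Set.ne_univ_iff_exists_notMem] at hne
    obtain ⟨z, hzmem⟩ := hne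
    rw [Set.mem_union] at hzmem
    push_neg at hzmem
    obtain ⟨r1, hr1z, hr1a, hr1b⟩ := rep_of_not_mem_arc z (by rw [← hCeq i]; exact hzmem.1)
    obtain ⟨r2, hr2z, hr2a, hr2b⟩ := rep_of_not_mem_arc z (by rw [← hCeq j]; exact hzmem.2)
    exact ⟨r1, r2, by rw [hr1z, hr2z], hr1a, hr1b, hr2a, hr2b⟩
  choose r1 r2 hreq hr1a hr1b hr2a hr2b using hz
  -- the margin δ
  set g : Fin n × Fin n → ℝ := fun ij =>
    min (min (r1 ij.1 ij.2 - w ij.1) (u ij.1 + pp - r1 ij.1 ij.2))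
        (min (r2 ij.1 ij.2 - w ij.2) (u ij.2 + pp - r2 ij.1 ij.2)) with hg
  have hPne : (Finset.univ : Finset (Fin n × Fin n)).Nonempty := Finset.univ_nonempty
  set δ : ℝ := min (Finset.univ.inf' hPne g) (π/2) with hδ
  have hδpos : 0 < δ := by
    rw [hδ]
    apply lt_min ?_ (by positivity)
    rw [Finset.lt_inf'_iff]
    rintro ⟨i, j⟩ _
    rw [hg]
    simp only [lt_min_iff]
    exact ⟨⟨by linarith [hr1a i j], by linarith [hr1b i j]⟩,
      ⟨by linarith [hr2a i j], by linarith [hr2b i j]⟩⟩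
  have hδle : ∀ i j, δ ≤ g (i, j) :=
    fun i j => le_trans (min_le_left _ _) (Finset.inf'_le g (Finset.mem_univ (i, j)))
  have hδpi : δ ≤ π/2 := min_le_right _ _
  -- thickened complements
  set E : Fin n → Set (AddCircle pp) := fun i => pr '' Set.Icc (w i + δ) (u i + pp - δ) with hE
  have hr1mem : ∀ i j, ((r1 i j : ℝ) : AddCircle pp) ∈ E i := by
    intro i j
    refine ⟨r1 i j, ⟨?_, ?_⟩, rfl⟩
    · have := hδle i j
      rw [hg] at this
      simp only [min_le_iff, le_min_iff] at this
      linarith [this.1.1]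
    · have := hδle i j
      rw [hg] at this
      simp only [le_min_iff] at this
      linarith [this.1.2]
  have hr2mem : ∀ i j, ((r2 i j : ℝ) : AddCircle pp) ∈ E j := by
    intro i j
    refine ⟨r2 i j, ⟨?_, ?_⟩, rfl⟩
    · have := hδle i j
      rw [hg] at this
      simp only [le_min_iff] at this
      linarith [this.2.1]
    · have := hδle i j
      rw [hg] at this
      simp only [le_min_iff] at this
      linarith [this.2.2]
  have hmeet : ∀ i j, (E i ∩ E j).Nonempty := by
    intro i j
    exact ⟨((r1 i j : ℝ) : AddCircle pp), hr1mem i j, by rw [hreq i j]; exact hr2mem i j⟩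
  have hab : ∀ i, w i + δ ≤ u i + pp - δ := by
    intro i
    have h1 := hr1mem i i
    obtain ⟨y, hy, _⟩ := h1
    -- not directly; use the real bounds instead
    have := hδle i i
    rw [hg] at this
    simp only [le_min_iff] at this
    linarith [this.1.1, this.1.2]
  -- candidate points
  set q : Fin n × Bool → ℝ := fun p => if p.2 then u p.1 + pp - δ else w p.1 + δ with hq
  set A : Fin n → Fin n × Bool → ℝ :=
    fun i p => (if ((q p : ℝ) : AddCircle pp) ∈ E i then (1:ℝ) else 0) - 1/2 with hA
  have hdual : ∀ lam : Fin n → ℝ, (∀ i, 0 ≤ lam i) → (∑ i, lam i) = 1 →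
      ∃ p, 0 < ∑ i, lam i * A i p := by
    intro lam hlam hsum
    obtain ⟨p, hp⟩ := dual_lemma (fun i => w i + δ) (fun i => u i + pp - δ) hab hmeet lam hlam hsum
    refine ⟨p, ?_⟩
    have heq : (∑ i, lam i * A i p) =
        (∑ i, if ((q p : ℝ) : AddCircle pp) ∈ E i then lam i else 0) - (∑ i, lam i)/2 := by
      rw [hA]
      exact sum_ind lam _
    rw [heq, hsum]
    have hq2 : ((q p : ℝ) : AddCircle pp) = (if p.2 then pr (u p.1 + pp - δ) else pr (w p.1 + δ)) := by
      rw [hq]; rcases p with ⟨i, b⟩; cases b <;> simp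
    rw [hq2]
    rw [hE]
    simpa using sub_pos.mpr hp
  obtain ⟨x, hxnn, hxsum, hxpos⟩ := gordan A hdual
  -- the good weight of each arc
  set s : Fin n → ℝ := fun i => ∑ p, if ((q p : ℝ) : AddCircle pp) ∈ E i then x p else 0 with hs
  have hs2 : ∀ i, 1/2 < s i := by
    intro i
    have heq : (∑ p, x p * A i p) =
        (∑ p, if ((q p : ℝ) : AddCircle pp) ∈ E i then x p else 0) - (∑ p, x p)/2 := by
      rw [hA]
      exact sum_ind x _
    have := hxpos i
    rw [heq, hxsum] at this
    rw [hs]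
    linarith
  have hsle : ∀ i, s i ≤ 1 := by
    intro i
    rw [hs, ← hxsum]
    apply Finset.sum_le_sum
    intro p _
    split
    · exact le_refl _
    · exact hxnn p
  set σ : ℝ := Finset.univ.inf' Finset.univ_nonempty s with hσ
  have hσhalf : 1/2 < σ := by
    rw [hσ, Finset.lt_inf'_iff]
    exact fun i _ => hs2 i
  have hσ1 : σ ≤ 1 := le_trans (Finset.inf'_le s (Finset.mem_univ ⟨0, hn⟩)) (hsle _)
  have hσle : ∀ i, σ ≤ s i := fun i => Finset.inf'_le s (Finset.mem_univ i)
  set ε : ℝ := (2*σ - 1)/4 with hε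
  have hεpos : 0 < ε := by rw [hε]; linarith
  have hεle : ε ≤ 1/4 := by rw [hε]; linarith
  have hBpos : 0 < Bint δ := Bint_pos hδpos hδpi
  set c : ℝ := pp * (1 - ε) / Bint δ with hc
  have hcnn : 0 ≤ c := by
    rw [hc]
    apply div_nonneg ?_ (le_of_lt hBpos)
    have : (0:ℝ) < π := Real.pi_pos
    nlinarith
  -- the function F
  set F : ℝ → ℝ := fun t => ε * t + c * ∑ p, x p * GP δ (q p) t with hF
  have hFcont : Continuous F := by
    apply Continuous.add (continuous_const.mul continuous_id)
    apply continuous_const.mul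
    apply continuous_finset_sum
    intro p _
    exact continuous_const.mul (GP_cont (q p))
  have hFmono : StrictMono F := by
    intro t t' htt
    rw [hF]
    simp only
    have hsum : ∀ p, x p * GP δ (q p) t ≤ x p * GP δ (q p) t' :=
      fun p => mul_le_mul_of_nonneg_left (GP_mono (q p) (le_of_lt htt)) (hxnn p)
    have := Finset.sum_le_sum (fun p (_ : p ∈ Finset.univ) => hsum p)
    nlinarith [mul_le_mul_of_nonneg_left this hcnn]
  have hFper : ∀ t, F (t + pp) = F t + pp := by
    intro t
    rw [hF]
    simp only
    have hGp : ∀ p, GP δ (q p) (t + pp) = GP δ (q p) t + Bint δ := fun p => GP_per (q p) t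
    have h1 : (∑ p, x p * GP δ (q p) (t + pp)) = (∑ p, x p * GP δ (q p) t) + 1 * Bint δ := by
      rw [← hxsum, Finset.sum_mul, ← Finset.sum_add_distrib]
      refine Finset.sum_congr rfl (fun p _ => ?_)
      rw [hGp p]; ring
    rw [h1]
    have hcB : c * Bint δ = pp * (1 - ε) := by
      rw [hc, div_mul_cancel₀ _ (ne_of_gt hBpos)]
    have : c * ((∑ p, x p * GP δ (q p) t) + 1 * Bint δ) =
        c * (∑ p, x p * GP δ (q p) t) + c * Bint δ := by ring
    rw [this, hcB]
    ring
  have hFsurj : Function.Surjective F := by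
    intro y
    obtain ⟨k, hk⟩ := exists_nat_ge ((|y| + |F 0|) / pp)
    have hkpp : |y| + |F 0| ≤ k * pp := by
      rw [div_le_iff₀ pp_pos] at hk
      linarith
    have hkp := per_int F hFper 0 (k : ℤ)
    have hkn := per_int F hFper 0 (-(k : ℤ))
    rw [zero_add] at hkp hkn
    push_cast at hkp hkn
    have hle : -(k:ℝ) * pp ≤ (k:ℝ) * pp := by
      nlinarith [abs_nonneg y, abs_nonneg (F 0), pp_pos]
    have hIcc := intermediate_value_Icc hle hFcont.continuousOn
    have hymem : y ∈ Set.Icc (F (-(k:ℝ) * pp)) (F ((k:ℝ) * pp)) := by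
      rw [hkp, hkn]
      constructor
      · have := neg_abs_le y
        have := neg_abs_le (F 0)
        nlinarith [le_abs_self (F 0)]
      · have := le_abs_self y
        nlinarith [neg_abs_le (F 0)]
    obtain ⟨t, _, ht⟩ := hIcc hymem
    exact ⟨t, ht⟩
  -- the order iso and homeomorphism
  set e : ℝ ≃o ℝ := StrictMono.orderIsoOfSurjective F hFmono hFsurj with he
  have hecoe : ∀ t, e t = F t := fun t => rfl
  have heper : ∀ t, e (t + pp) = e t + pp := by
    intro t; rw [hecoe, hecoe]; exact hFper t
  refine ⟨circHomeo e heper, F, hFmono, fun t => circHomeo_coe e heper t, ?_⟩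
  intro i
  refine ⟨F (u i), F (w i), hFmono.monotone (huw i), ?_, ?_⟩
  · -- the length bound
    have hsplit : ∀ p : Fin n × Bool, x p * (GP δ (q p) (w i) - GP δ (q p) (u i)) ≤
        (if ((q p : ℝ) : AddCircle pp) ∈ E i then 0 else x p) * Bint δ := by
      intro p
      by_cases hmem : ((q p : ℝ) : AddCircle pp) ∈ E i
      · rw [if_pos hmem, zero_mul]
        have hex : ∃ m : ℤ, w i + δ ≤ q p + m * pp ∧ q p + m * pp ≤ u i + pp - δ := by
          rw [hE] at hmem
          obtain ⟨m, hm1, hm2⟩ := mem_arc_iff.mp hmem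
          exact ⟨m, hm1, hm2⟩
        rw [GP_arc_zero hδpos hδpi (huw i) hex, mul_zero]
      · rw [if_neg hmem]
        have hle1 : GP δ (q p) (w i) - GP δ (q p) (u i) ≤ Bint δ :=
          GP_arc_le hδpos (huw i) (by linarith [hlen i])
        exact mul_le_mul_of_nonneg_left hle1 (hxnn p)
    have hsum3 : (∑ p, x p * (GP δ (q p) (w i) - GP δ (q p) (u i))) =
        (∑ p, x p * GP δ (q p) (w i)) - ∑ p, x p * GP δ (q p) (u i) := by
      rw [← Finset.sum_sub_distrib]
      exact Finset.sum_congr rfl (fun p _ => by ring)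
    have hFdiff : F (w i) - F (u i) =
        ε * (w i - u i) + c * ∑ p, x p * (GP δ (q p) (w i) - GP δ (q p) (u i)) := by
      rw [hF]
      simp only
      rw [hsum3]
      ring
    have hsum4 : (∑ p, x p * (GP δ (q p) (w i) - GP δ (q p) (u i))) ≤
        (∑ p, (if ((q p : ℝ) : AddCircle pp) ∈ E i then (0:ℝ) else x p)) * Bint δ := by
      rw [Finset.sum_mul]
      exact Finset.sum_le_sum (fun p _ => hsplit p)
    have hbad : (∑ p, (if ((q p : ℝ) : AddCircle pp) ∈ E i then (0:ℝ) else x p)) = 1 - s i := by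
      rw [hs, ← hxsum]
      simp only
      rw [← Finset.sum_sub_distrib]
      refine Finset.sum_congr rfl (fun p _ => ?_)
      split <;> ring
    have hcB : c * Bint δ = pp * (1 - ε) := by
      rw [hc, div_mul_cancel₀ _ (ne_of_gt hBpos)]
    have hstep : c * (∑ p, x p * (GP δ (q p) (w i) - GP δ (q p) (u i))) ≤
        (pp * (1 - ε)) * (1 - s i) := by
      have h1 := mul_le_mul_of_nonneg_left hsum4 hcnn
      rw [hbad] at h1
      calc c * (∑ p, x p * (GP δ (q p) (w i) - GP δ (q p) (u i))) ≤ c * ((1 - s i) * Bint δ) := h1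
        _ = (c * Bint δ) * (1 - s i) := by ring
        _ = (pp * (1 - ε)) * (1 - s i) := by rw [hcB]
    have hwub : w i - u i < pp := by linarith [hlen i]
    have hεlt1 : ε < 1 := by linarith
    have h1s : 1 - s i ≤ 1 - σ := by linarith [hσle i]
    have hfin1 : ε * (w i - u i) ≤ ε * pp := by nlinarith [Real.pi_pos]
    have hfin2 : (pp * (1 - ε)) * (1 - s i) ≤ (pp * (1 - ε)) * (1 - σ) := by
      apply mul_le_mul_of_nonneg_left h1s
      nlinarith [Real.pi_pos]
    have hfin3 : ε * pp + (pp * (1 - ε)) * (1 - σ) < π := by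
      have hπ := Real.pi_pos
      have key : ε + (1 - ε) * (1 - σ) < 1/2 := by nlinarith
      nlinarith
    linarith [hFdiff, hstep, hfin1, hfin2, hfin3]
  · have himg := circHomeo_image_arc e heper (u i) (w i)
    rw [hCeq i, himg, hecoe, hecoe]

open Real in
theorem normal_arcs_shortened
    {n : ℕ} (C : Fin n → Set (AddCircle (2 * π)))
    (harc : ∀ i, ∃ u w : ℝ, u ≤ w ∧
      C i = (fun x : ℝ => (x : AddCircle (2 * π))) '' Set.Icc u w)
    (hnormal : ∀ i j, C i ∪ C j ≠ Set.univ) :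
    ∃ f : AddCircle (2 * π) ≃ₜ AddCircle (2 * π), ∃ F : ℝ → ℝ, StrictMono F ∧
      (∀ x : ℝ, f (x : AddCircle (2 * π)) = (F x : AddCircle (2 * π))) ∧
      ∀ i, ∃ c d : ℝ, c ≤ d ∧ d - c < π ∧
        f '' C i = (fun x : ℝ => (x : AddCircle (2 * π))) '' Set.Icc c d :=
  normal_arcs_shortened_aux C harc hnormal
end
end

section
/- Let F be a finite family of continuous functions, each defined on a compact subinterval of [a, b], whose graphs pairwise intersect in at most one point, and let P be a finite set of points in ℝ² with pairwise distinct x-coordinates lying in [a, b], such that no two points of P lie on a common graph of F. Suppose that for every finite family F' ⊇ F of such functions with pairwise at-most-one-point intersecting graphs and every pair p, q ∈ P with distinct x-coordinates not on a common graph of F', there exists a continuous function on the interval between the x-coordinates of p and q whose graph joins p to q and meets each graph of F' at most once. Then there exists a family G of continuous functions containing F, with all graphs in G pairwise intersecting in at most one point, such that for every pair of distinct points p, q ∈ P some graph in G has endpoints p and q. -/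
/-!
Add the required edges one at a time, each time applying the single-edge extension property to
the family built so far, and add them in order of increasing horizontal extent. The only thing to
check is that the next pair `p, q` is never already joined: a graph of the family through both `p`
and `q` cannot come from `F`, and a previously added graph spans an interval no wider than
`|p.1 - q.1|`, so it could only pass through `p` and `q` if these were its endpoints, i.e. if the
pair had been added already.
-/

/-- A pseudosegment is given by a triple `(u, v, f)`; its graph is the graph of
`f` restricted to `[u, v]`. -/
def PSGraph (s : ℝ × ℝ × (ℝ → ℝ)) : Set (ℝ × ℝ) :=
  {p : ℝ × ℝ | p.1 ∈ Set.Icc s.1 s.2.1 ∧ p.2 = s.2.2 p.1}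

/-- A finite family of continuous functions on compact subintervals of `[a, b]`
whose graphs pairwise intersect in at most one point. -/
def NiceFamily (a b : ℝ) (S : Set (ℝ × ℝ × (ℝ → ℝ))) : Prop :=
  S.Finite ∧
  (∀ s ∈ S, s.1 ≤ s.2.1 ∧ Set.Icc s.1 s.2.1 ⊆ Set.Icc a b ∧
    ContinuousOn s.2.2 (Set.Icc s.1 s.2.1)) ∧
  (∀ s ∈ S, ∀ t ∈ S, PSGraph s ≠ PSGraph t → (PSGraph s ∩ PSGraph t).Subsingleton)

def PSEnds (s : ℝ × ℝ × (ℝ → ℝ)) : Sym2 (ℝ × ℝ) :=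
  s((s.1, s.2.2 s.1), (s.2.1, s.2.2 s.2.1))

def xDist : Sym2 (ℝ × ℝ) → ℝ :=
  Sym2.lift ⟨fun p q => |p.1 - q.1|, fun p q => abs_sub_comm p.1 q.1⟩

lemma setOf_PSEnds_eq_pair {s : ℝ × ℝ × (ℝ → ℝ)} {p q : ℝ × ℝ} (h : PSEnds s = s(p, q)) :
    ({(s.1, s.2.2 s.1), (s.2.1, s.2.2 s.2.1)} : Set (ℝ × ℝ)) = {p, q} :=
  Set.pair_eq_pair_iff.mpr (Sym2.eq_iff.mp h)

lemma PSEnds_of_apply_eq {p q : ℝ × ℝ} {g : ℝ → ℝ} (hp : g p.1 = p.2) (hq : g q.1 = q.2) :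
    PSEnds (min p.1 q.1, max p.1 q.1, g) = s(p, q) := by
  rcases le_total p.1 q.1 with h | h
  · simp only [PSEnds, min_eq_left h, max_eq_right h, hp, hq]
  · simp only [PSEnds, min_eq_right h, max_eq_left h, hp, hq]
    exact Sym2.eq_swap

lemma mk_eq_PSEnds_of_mem_PSGraph {s : ℝ × ℝ × (ℝ → ℝ)} {p q : ℝ × ℝ}
    (hp : p ∈ PSGraph s) (hq : q ∈ PSGraph s) (hwide : xDist (PSEnds s) ≤ |p.1 - q.1|) :
    s(p, q) = PSEnds s := by
  obtain ⟨⟨hp₁, hp₂⟩, hp⟩ := hp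
  obtain ⟨⟨hq₁, hq₂⟩, hq⟩ := hq
  change |s.1 - s.2.1| ≤ |p.1 - q.1| at hwide
  rw [abs_sub_comm s.1, abs_of_nonneg (by linarith)] at hwide
  rcases le_total p.1 q.1 with h | h
  · rw [abs_sub_comm, abs_of_nonneg (by linarith)] at hwide
    have hps : p.1 = s.1 := by linarith
    have hqs : q.1 = s.2.1 := by linarith
    rw [show p = (s.1, s.2.2 s.1) from Prod.ext hps (by rw [hp, hps]),
      show q = (s.2.1, s.2.2 s.2.1) from Prod.ext hqs (by rw [hq, hqs])]
    rfl
  · rw [abs_of_nonneg (by linarith)] at hwide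
    have hps : p.1 = s.2.1 := by linarith
    have hqs : q.1 = s.1 := by linarith
    rw [show p = (s.2.1, s.2.2 s.2.1) from Prod.ext hps (by rw [hp, hps]),
      show q = (s.1, s.2.2 s.1) from Prod.ext hqs (by rw [hq, hqs])]
    exact Sym2.eq_swap

lemma NiceFamily.insert {a b : ℝ} {G : Set (ℝ × ℝ × (ℝ → ℝ))} {t : ℝ × ℝ × (ℝ → ℝ)}
    (hG : NiceFamily a b G)
    (ht : t.1 ≤ t.2.1 ∧ Set.Icc t.1 t.2.1 ⊆ Set.Icc a b ∧ ContinuousOn t.2.2 (Set.Icc t.1 t.2.1))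
    (hcross : ∀ s ∈ G, (PSGraph t ∩ PSGraph s).Subsingleton) :
    NiceFamily a b (insert t G) := by
  obtain ⟨hfin, hseg, hpair⟩ := hG
  refine ⟨hfin.insert t, ?_, ?_⟩
  · rintro s (rfl | hs)
    exacts [ht, hseg s hs]
  · rintro s (rfl | hs) s' (rfl | hs') hne
    · exact absurd rfl hne
    · exact hcross s' hs'
    · exact Set.inter_comm _ _ ▸ hcross s hs
    · exact hpair s hs s' hs' hne

lemma exists_niceFamily_realizing (a b : ℝ) (F : Set (ℝ × ℝ × (ℝ → ℝ)))
    (hF : NiceFamily a b F) (P : Set (ℝ × ℝ))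
    (hPx : ∀ p ∈ P, p.1 ∈ Set.Icc a b)
    (hPdist : ∀ p ∈ P, ∀ q ∈ P, p ≠ q → p.1 ≠ q.1)
    (hPF : ∀ p ∈ P, ∀ q ∈ P, p ≠ q → ∀ s ∈ F, ¬ (p ∈ PSGraph s ∧ q ∈ PSGraph s))
    (hext : ∀ F' : Set (ℝ × ℝ × (ℝ → ℝ)), F ⊆ F' → NiceFamily a b F' →
      ∀ p ∈ P, ∀ q ∈ P, p.1 ≠ q.1 →
        (∀ s ∈ F', ¬ (p ∈ PSGraph s ∧ q ∈ PSGraph s)) →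
        ∃ g : ℝ → ℝ, ContinuousOn g (Set.Icc (min p.1 q.1) (max p.1 q.1)) ∧
          g p.1 = p.2 ∧ g q.1 = q.2 ∧
          ∀ s ∈ F', (PSGraph (min p.1 q.1, max p.1 q.1, g) ∩ PSGraph s).Subsingleton)
    (E : Finset (Sym2 (ℝ × ℝ))) (hE : ∀ e ∈ E, (∀ x ∈ e, x ∈ P) ∧ ¬ e.IsDiag) :
    ∃ G : Set (ℝ × ℝ × (ℝ → ℝ)), F ⊆ G ∧ NiceFamily a b G ∧
      (∀ e ∈ E, ∃ s ∈ G, PSEnds s = e) ∧ ∀ s ∈ G, s ∉ F → PSEnds s ∈ E := by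
  classical
  induction E using Finset.induction_on_max_value xDist with
  | empty => exact ⟨F, subset_rfl, hF, by simp, fun s hs hsF => absurd hs hsF⟩
  | insert e E he hmax ih =>
    obtain ⟨G, hFG, hG, hrealized, hnew⟩ :=
      ih fun e' he' => hE e' (Finset.mem_insert_of_mem he')
    induction e using Sym2.ind with | _ p q => ?_
    obtain ⟨hPe, hpq⟩ := hE s(p, q) (Finset.mem_insert_self _ _)
    have hp : p ∈ P := hPe p (Sym2.mem_mk_left p q)
    have hq : q ∈ P := hPe q (Sym2.mem_mk_right p q)
    have hpq : p ≠ q := fun h => hpq (Sym2.mk_isDiag_iff.mpr h)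
    have hunjoined : ∀ s ∈ G, ¬ (p ∈ PSGraph s ∧ q ∈ PSGraph s) := by
      rintro s hs ⟨hps, hqs⟩
      by_cases hsF : s ∈ F
      · exact hPF p hp q hq hpq s hsF ⟨hps, hqs⟩
      · have hsE := hnew s hs hsF
        exact he (mk_eq_PSEnds_of_mem_PSGraph hps hqs (hmax _ hsE) ▸ hsE)
    obtain ⟨g, hgc, hgp, hgq, hgcross⟩ := hext G hFG hG p hp q hq (hPdist p hp q hq hpq) hunjoined
    refine ⟨insert (min p.1 q.1, max p.1 q.1, g) G, hFG.trans (Set.subset_insert _ _),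
      hG.insert ⟨min_le_max, Set.uIcc_subset_Icc (hPx p hp) (hPx q hq), hgc⟩ hgcross, ?_, ?_⟩
    · rintro e' he'
      rcases Finset.mem_insert.mp he' with rfl | he'
      · exact ⟨_, Set.mem_insert _ _, PSEnds_of_apply_eq hgp hgq⟩
      · obtain ⟨s, hs, hse⟩ := hrealized e' he'
        exact ⟨s, Set.mem_insert_of_mem _ hs, hse⟩
    · rintro s (rfl | hs) hsF
      · exact PSEnds_of_apply_eq hgp hgq ▸ Finset.mem_insert_self _ _
      · exact Finset.mem_insert_of_mem (hnew s hs hsF)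

theorem iterated_extension (a b : ℝ) (F : Set (ℝ × ℝ × (ℝ → ℝ)))
    (hF : NiceFamily a b F)
    (P : Set (ℝ × ℝ)) (hPfin : P.Finite)
    (hPx : ∀ p ∈ P, p.1 ∈ Set.Icc a b)
    (hPdist : ∀ p ∈ P, ∀ q ∈ P, p ≠ q → p.1 ≠ q.1)
    (hPF : ∀ p ∈ P, ∀ q ∈ P, p ≠ q → ∀ s ∈ F, ¬ (p ∈ PSGraph s ∧ q ∈ PSGraph s))
    -- single-edge extension property for every larger nice family
    (hext : ∀ F' : Set (ℝ × ℝ × (ℝ → ℝ)), F ⊆ F' → NiceFamily a b F' →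
      ∀ p ∈ P, ∀ q ∈ P, p.1 ≠ q.1 →
        (∀ s ∈ F', ¬ (p ∈ PSGraph s ∧ q ∈ PSGraph s)) →
        ∃ g : ℝ → ℝ, ContinuousOn g (Set.Icc (min p.1 q.1) (max p.1 q.1)) ∧
          g p.1 = p.2 ∧ g q.1 = q.2 ∧
          ∀ s ∈ F', (PSGraph (min p.1 q.1, max p.1 q.1, g) ∩ PSGraph s).Subsingleton) :
    ∃ G : Set (ℝ × ℝ × (ℝ → ℝ)), F ⊆ G ∧ NiceFamily a b G ∧
      ∀ p ∈ P, ∀ q ∈ P, p ≠ q → ∃ s ∈ G,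
        ({(s.1, s.2.2 s.1), (s.2.1, s.2.2 s.2.1)} : Set (ℝ × ℝ)) = {p, q} := by
  classical
  let E := hPfin.toFinset.sym2.filter (¬ ·.IsDiag)
  have hE : ∀ e ∈ E, (∀ x ∈ e, x ∈ P) ∧ ¬ e.IsDiag := fun e he => by
    simpa [E, Finset.mem_sym2_iff] using he
  obtain ⟨G, hFG, hG, hrealized, -⟩ :=
    exists_niceFamily_realizing a b F hF P hPx hPdist hPF hext E hE
  refine ⟨G, hFG, hG, fun p hp q hq hpq => ?_⟩
  have hpqE : s(p, q) ∈ E := by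
    simp [E, Finset.mem_sym2_iff, hp, hq, hpq]
  obtain ⟨s, hs, hse⟩ := hrealized _ hpqE
  exact ⟨s, hs, setOf_PSEnds_eq_pair hse⟩
end
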